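/- arXiv:2003.11012 — 2 statements merged into one kernel-verified Lean document; each statement's English description precedes it below -/
import Mathlib

section
/- Let T_c(S) = −(1/864)(6S²−10S+3)(3S−2)²/(S(S−1)³). Then T_c(S) > 0 for all S in the interval (S_perc, S_c], where S_perc = 1/2 − √3/6 and S_c = (5−√7)/9. -/
open Real

noncomputable def Tc (S : ℝ) : ℝ :=
  -(1/864) * (6 * S^2 - 10 * S + 3) * (3 * S - 2)^2 / (S * (S - 1)^3)

theorem stmt_14 :
    ∀ S ∈ Set.Ioc (1/2 - Real.sqrt 3 / 6) ((5 - Real.sqrt 7) / 9), 0 < Tc S := by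
  rintro S ⟨h1, h2⟩
  have s3 : Real.sqrt 3 < 1.8 := by
    nlinarith [Real.sq_sqrt (show (0:ℝ) ≤ 3 by norm_num), Real.sqrt_nonneg 3]
  have s7 : (2.6:ℝ) < Real.sqrt 7 := by
    nlinarith [Real.sq_sqrt (show (0:ℝ) ≤ 7 by norm_num), Real.sqrt_nonneg 7]
  have hl : (0.2:ℝ) < S := by nlinarith
  have hu : S < 0.27 := by nlinarith
  unfold Tc
  apply div_pos_of_neg_of_neg
  · nlinarith [sq_nonneg (3*S-2), sq_nonneg S]
  · have h3 : (S-1)^3 < 0 := by nlinarith [sq_nonneg (S-1)]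
    exact mul_neg_of_pos_of_neg (by linarith) h3
end

section
/- The three roots of ∂_H û(H;S) = 0 other than cancellation, namely H = S and H = (6S²−2S−1 ± √(108S⁴−192S³+108S²−20S+1))/(6S−4), satisfy: for S ∈ (S_perc, S_c) with S_perc = 1/2−√3/6, S_c = (5−√7)/9, the discriminant 108S⁴−192S³+108S²−20S+1 is nonnegative and both roots given by the ± formula are real and strictly greater than S. -/
open Real

theorem stmt_15 :
    ∀ S ∈ Set.Ioo (1/2 - Real.sqrt 3 / 6) ((5 - Real.sqrt 7) / 9),
      0 ≤ 108 * S^4 - 192 * S^3 + 108 * S^2 - 20 * S + 1 ∧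
      S < (6 * S^2 - 2 * S - 1
            + Real.sqrt (108 * S^4 - 192 * S^3 + 108 * S^2 - 20 * S + 1))
          / (6 * S - 4) ∧
      S < (6 * S^2 - 2 * S - 1
            - Real.sqrt (108 * S^4 - 192 * S^3 + 108 * S^2 - 20 * S + 1))
          / (6 * S - 4) := by
  rintro S ⟨hS1, hS2⟩
  have s3 : Real.sqrt 3 ^ 2 = 3 := Real.sq_sqrt (by norm_num)
  have s7 : Real.sqrt 7 ^ 2 = 7 := Real.sq_sqrt (by norm_num)
  have s3nn := Real.sqrt_nonneg 3
  have s7nn := Real.sqrt_nonneg 7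
  have h3lt : Real.sqrt 3 < 1.8 := by nlinarith
  have h7gt : (2.6:ℝ) < Real.sqrt 7 := by nlinarith
  -- rough rational bounds on S
  have hSub : S < 0.27 := by linarith
  -- 6S^2 - 6S + 1 < 0
  have h6 : 6*S^2 - 6*S + 1 < 0 := by
    have h1 : 3 - 6*S < Real.sqrt 3 := by linarith
    have h2 : (0:ℝ) ≤ 3 - 6*S := by linarith
    nlinarith
  -- 9S^2 - 10S + 2 > 0
  have h9 : 0 < 9*S^2 - 10*S + 2 := by
    have h1 : Real.sqrt 7 < 5 - 9*S := by linarith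
    nlinarith
  have h18 : 18*S^2 - 14*S + 1 < 0 := by linarith
  have hS0 : 0 < S := by nlinarith [sq_nonneg S]
  have hD : 0 ≤ 108 * S^4 - 192 * S^3 + 108 * S^2 - 20 * S + 1 := by
    nlinarith [mul_pos (show 0 < -(6*S^2-6*S+1) by linarith)
      (show 0 < -(18*S^2-14*S+1) by linarith)]
  refine ⟨hD, ?_, ?_⟩
  · rw [lt_div_iff_of_neg (by linarith : 6*S - 4 < 0)]
    have hkey : 108 * S^4 - 192 * S^3 + 108 * S^2 - 20 * S + 1 < (1 - 2*S)^2 := by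
      nlinarith [mul_pos (mul_pos hS0 (show (0:ℝ) < 2 - 3*S by linarith)) h9]
    have := (Real.sqrt_lt' (show (0:ℝ) < 1 - 2*S by linarith)).2 hkey
    linarith
  · rw [lt_div_iff_of_neg (by linarith : 6*S - 4 < 0)]
    have := Real.sqrt_nonneg (108 * S^4 - 192 * S^3 + 108 * S^2 - 20 * S + 1)
    nlinarith
end
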